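/- Let K be a convex body in ℝⁿ and ρ₂ > ρ₁ ≥ 0. The map Φ((ξ,ν),ρ) = ξ + ρν is a surjection from N K × [ρ₁,ρ₂] onto the annulus A_K(ρ₁,ρ₂) = {x ∈ closure(ℝⁿ \ K) : ρ₁ ≤ dist(x,K) ≤ ρ₂}. -/

import Mathlib

open Metric Set
open scoped RealInnerProductSpace

/-!
Let `d = infDist x K`. If `x ∈ K`, then `d = 0` and `x`, which is not an interior point, carries a
supporting hyperplane (Hahn–Banach, using that `K` has interior points); take `ξ = x` and `ν` its
unit normal. Otherwise let `ξ` be a nearest point of the compact set `K` to `x`; the variational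
inequality of the metric projection onto a convex set says that `ν = (x - ξ) / d` is an outer
normal at `ξ`. In both cases `x = ξ + d • ν`, and a point of `K` with a nonzero outer normal lies
on the frontier of `K`.
-/

section OuterNormal

variable {E : Type*} [NormedAddCommGroup E] [InnerProductSpace ℝ E]

theorem mem_frontier_of_forall_inner_sub_nonpos {K : Set E} {ξ ν : E} (hξ : ξ ∈ K) (hν : ν ≠ 0)
    (hnormal : ∀ y ∈ K, ⟪y - ξ, ν⟫ ≤ 0) : ξ ∈ frontier K := by
  refine ⟨subset_closure hξ, fun hint => ?_⟩
  have hray : Filter.Tendsto (fun t : ℝ => ξ + t • ν) (nhdsWithin 0 (Ioi 0)) (nhds ξ) := by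
    have : Filter.Tendsto (fun t : ℝ => ξ + t • ν) (nhds 0) (nhds ξ) := by
      simpa using (by fun_prop : Continuous fun t : ℝ => ξ + t • ν).tendsto 0
    exact this.mono_left nhdsWithin_le_nhds
  obtain ⟨t, htK, ht⟩ :=
    ((hray.eventually (mem_interior_iff_mem_nhds.mp hint)).and self_mem_nhdsWithin).exists
  have hpos : 0 < t * ‖ν‖ ^ 2 := mul_pos ht (pow_pos (norm_pos_iff.mpr hν) 2)
  have := hnormal _ htK
  rw [add_sub_cancel_left, real_inner_smul_left, real_inner_self_eq_norm_sq] at this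
  linarith

theorem Convex.exists_unit_normal_of_notMem_interior [CompleteSpace E] {K : Set E}
    (hK : Convex ℝ K) (hKint : (interior K).Nonempty) {x : E} (hx : x ∉ interior K) :
    ∃ ν : E, ‖ν‖ = 1 ∧ ∀ y ∈ K, ⟪y - x, ν⟫ ≤ 0 := by
  obtain ⟨f, hf0, hf⟩ := geometric_hahn_banach_of_nonempty_interior_point hK hx hKint
  set v := (InnerProductSpace.toDual ℝ E).symm f
  have hv : v ≠ 0 := by simpa [v] using hf0
  refine ⟨‖v‖⁻¹ • v, norm_smul_inv_norm hv, fun y hy => ?_⟩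
  have hfy : ⟪v, y - x⟫ ≤ 0 := by
    rw [InnerProductSpace.toDual_symm_apply, map_sub, sub_nonpos]
    exact hf y hy
  rw [real_inner_smul_right, real_inner_comm]
  exact mul_nonpos_of_nonneg_of_nonpos (by positivity) hfy

theorem Convex.inner_sub_nonpos_of_dist_eq_infDist {K : Set E} (hK : Convex ℝ K) {x ξ : E}
    (hξ : ξ ∈ K) (hdist : dist x ξ = infDist x K) : ∀ y ∈ K, ⟪y - ξ, x - ξ⟫ ≤ 0 := by
  have hmin : ‖x - ξ‖ = ⨅ w : K, ‖x - w‖ := by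
    simp_rw [← dist_eq_norm, hdist, infDist_eq_iInf]
  intro y hy
  rw [real_inner_comm]
  exact (norm_eq_iInf_iff_real_inner_le_zero hK hξ).mp hmin y hy

theorem IsCompact.exists_add_infDist_smul_eq [CompleteSpace E] {K : Set E} (hKcomp : IsCompact K)
    (hKconv : Convex ℝ K) (hKint : (interior K).Nonempty) {x : E} (hx : x ∉ interior K) :
    ∃ ξ ∈ K, ∃ ν : E, ‖ν‖ = 1 ∧ (∀ y ∈ K, ⟪y - ξ, ν⟫ ≤ 0) ∧ ξ + infDist x K • ν = x := by
  by_cases hxK : x ∈ K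
  · obtain ⟨ν, hν, hnormal⟩ := hKconv.exists_unit_normal_of_notMem_interior hKint hx
    exact ⟨x, hxK, ν, hν, hnormal, by simp [infDist_zero_of_mem hxK]⟩
  obtain ⟨ξ, hξ, hdist⟩ := hKcomp.exists_infDist_eq_dist (hKint.mono interior_subset) x
  have hne : x - ξ ≠ 0 := sub_ne_zero.mpr (ne_of_mem_of_not_mem hξ hxK).symm
  have hd : infDist x K = ‖x - ξ‖ := by rw [hdist, dist_eq_norm]
  refine ⟨ξ, hξ, ‖x - ξ‖⁻¹ • (x - ξ), norm_smul_inv_norm hne, fun y hy => ?_, ?_⟩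
  · rw [real_inner_smul_right]
    exact mul_nonpos_of_nonneg_of_nonpos (by positivity)
      (hKconv.inner_sub_nonpos_of_dist_eq_infDist hξ hdist.symm y hy)
  · rw [hd, smul_smul, mul_inv_cancel₀ (norm_ne_zero_iff.mpr hne), one_smul, add_sub_cancel]

end OuterNormal

theorem stmt1 {n : ℕ} (K : Set (EuclideanSpace ℝ (Fin n)))
    (hKcomp : IsCompact K) (hKconv : Convex ℝ K) (hKint : (interior K).Nonempty)
    (ρ₁ ρ₂ : ℝ)
    (x : EuclideanSpace ℝ (Fin n))
    (hx : x ∈ closure Kᶜ) (hx₁ : ρ₁ ≤ infDist x K) (hx₂ : infDist x K ≤ ρ₂) :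
    ∃ ξ ν : EuclideanSpace ℝ (Fin n), ∃ ρ : ℝ,
      ξ ∈ frontier K ∧ ‖ν‖ = 1 ∧ (∀ y ∈ K, inner ℝ (y - ξ) ν ≤ (0:ℝ)) ∧
      ρ ∈ Icc ρ₁ ρ₂ ∧ ξ + ρ • ν = x := by
  have hxint : x ∉ interior K := by rwa [closure_compl] at hx
  obtain ⟨ξ, hξ, ν, hν, hnormal, hdecomp⟩ :=
    hKcomp.exists_add_infDist_smul_eq hKconv hKint hxint
  have hν0 : ν ≠ 0 := norm_ne_zero_iff.mp (hν.symm ▸ one_ne_zero)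
  exact ⟨ξ, ν, infDist x K, mem_frontier_of_forall_inner_sub_nonpos hξ hν0 hnormal, hν, hnormal,
    ⟨hx₁, hx₂⟩, hdecomp⟩
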